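/- For every k ≥ 1 and all h₁, h₂ ∈ H, one has [h₁h₂, x, (2^k−1)…, x] ≡ [h₁, x, (2^k−1)…, x] · [h₂, x, (2^k−1)…, x] modulo L_k, i.e. ([h₁,x,(2^k−1)…,x]·[h₂,x,(2^k−1)…,x])^{−1} · [h₁h₂,x,(2^k−1)…,x] ∈ L_k. (Lemma 3.3(ii) of the paper.) -/

import Mathlib

namespace Paper

variable {G : Type*} [Group G]

/-- The paper's commutator `[a,b] = a⁻¹ b⁻¹ a b`. -/
def pc {G : Type*} [Group G] (a b : G) : G := a⁻¹ * b⁻¹ * a * b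

/-- The left-normed iterated commutator `[a, x, (r)…, x]`. -/
def itc {G : Type*} [Group G] (x a : G) : ℕ → G
  | 0 => a
  | r + 1 => pc (itc x a r) x

/-- `c_i`, where `c_1 = y` and `c_{i+1} = [c_i, x]`; equivalently `c_i = [y, x, (i-1)…, x]`. -/
def cc (x y : G) (i : ℕ) : G := itc x y (i - 1)

/-- `z_{m,n} = [c_m, c_n]`. -/
def zz (x y : G) (m n : ℕ) : G := pc (cc x y m) (cc x y n)

/-- `H = ⟨c_i : i ≥ 1⟩`. -/
def Hsub (x y : G) : Subgroup G :=
  Subgroup.closure {g | ∃ i, 1 ≤ i ∧ g = cc x y i}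

/-- `Z = ⟨c_l², z_{m,n} : l, m, n ≥ 1⟩`. -/
def Zsub (x y : G) : Subgroup G :=
  Subgroup.closure ({g | ∃ l, 1 ≤ l ∧ g = cc x y l ^ 2} ∪
    {g | ∃ m n, 1 ≤ m ∧ 1 ≤ n ∧ g = zz x y m n})

/-- `w_{i,j,k} = ∏_{t=1}^{2^k−1} [z_{i+t,j+t−1}, x, (2^k−1−t)…, x]`,
factors in order of increasing `t` (reindexed by `t ↦ t+1`). -/
def ww (x y : G) (i j k : ℕ) : G :=
  ((List.range (2 ^ k - 1)).map
    (fun t => itc x (zz x y (i + t + 1) (j + t)) (2 ^ k - 2 - t))).prod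

/-- `L_k`, the normal closure of `{w_{i,j,k} : i,j ≥ 1} ∪ {z_{m,n} : m ≥ 2^k, n ≥ 1}`. -/
def Lsub (x y : G) (k : ℕ) : Subgroup G :=
  Subgroup.normalClosure ({g | ∃ i j, 1 ≤ i ∧ 1 ≤ j ∧ g = ww x y i j k} ∪
    {g | ∃ m n, 2 ^ k ≤ m ∧ 1 ≤ n ∧ g = zz x y m n})

/-- `Q_k = ⟨c_l² : l ≥ 2^{k−1}⟩`. -/
def Qsub (x y : G) (k : ℕ) : Subgroup G :=
  Subgroup.closure {g | ∃ l, 2 ^ (k - 1) ≤ l ∧ g = cc x y l ^ 2}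

/-- `d_k(h) = [h,x,(2^k−1)…,x]⁻¹ · x^{−2^k} · (xh)^{2^k}`. -/
def dd (x y : G) (k : ℕ) (h : G) : G :=
  (itc x h (2 ^ k - 1))⁻¹ * (x ^ 2 ^ k)⁻¹ * (x * h) ^ 2 ^ k

/-- `Γ^{2^k} = ⟨g^{2^k} : g ∈ Γ⟩`. -/
def pow2Sub (G : Type*) [Group G] (k : ℕ) : Subgroup G :=
  Subgroup.closure {g | ∃ a : G, g = a ^ 2 ^ k}

/-- `ζ(h₁,h₂) = ∏_{ℓ=0}^{2^k−2} [h₁^x, x, (ℓ)…, x, h₂, x, (2^k−2−ℓ)…, x]`,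
factors in order of increasing `ℓ`. -/
def zeta (x : G) (k : ℕ) (h₁ h₂ : G) : G :=
  ((List.range (2 ^ k - 1)).map
    (fun l => itc x (pc (itc x (x⁻¹ * h₁ * x) l) h₂) (2 ^ k - 2 - l))).prod

/-!
Write `h⁽ʳ⁾ = [h, x, (r)…, x]` and let `E_r(h₁, h₂) = (h₁⁽ʳ⁾ h₂⁽ʳ⁾)⁻¹ (h₁h₂)⁽ʳ⁾`. Since `[H, H] ≤ Z`,
`Z` is central in `H` and normalised by `x`, commuting `[h₁⁽ʳ⁾ h₂⁽ʳ⁾ E_r, x]` into shape gives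
`E_{r+1} = [E_r, x] · [h₁⁽ʳ⁺¹⁾, h₂⁽ʳ⁾]`, hence `E_r = ∏_{l<r} [h₁⁽ˡ⁺¹⁾, h₂⁽ˡ⁾, x, (r-1-l)…, x]`.
The same recursion shows that `E_r` is multiplicative in each argument on `H`, so
`E_{2^k-1}` lies in any subgroup containing its values on pairs of generators `c_i, c_j`, which are
exactly the `w_{i,j,k}`.
-/

lemma pc_one_left (b : G) : pc 1 b = 1 := by simp [pc]

lemma pc_one_right (a : G) : pc a 1 = 1 := by simp [pc]

lemma pc_eq_one_of_commute {a b : G} (h : Commute a b) : pc a b = 1 := by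
  simp [pc, mul_assoc, h.eq]

lemma pc_inv_swap (a b : G) : (pc a b)⁻¹ = pc b a := by simp only [pc]; group

lemma pc_mul_left_of_commute {a b c : G} (h : Commute b (pc a c)) :
    pc (a * b) c = pc a c * pc b c := by
  rw [← h.inv_mul_cancel_assoc]
  simp only [pc]; group

lemma pc_mul_right_of_commute {a b c : G} (h : Commute c (pc a b)) :
    pc a (b * c) = pc a c * pc a b := by
  rw [← h.inv_mul_cancel_assoc]
  simp only [pc]; group

lemma pc_mul_left_expand (a b c : G) : pc (a * b) c = pc a c * pc (pc a c) b * pc b c := by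
  simp only [pc]; group

lemma itc_add (x a : G) (m n : ℕ) : itc x (itc x a m) n = itc x a (m + n) := by
  induction n with
  | zero => rfl
  | succ n ih => rw [itc, ih]; rfl

lemma itc_cc (x y : G) {i : ℕ} (hi : 1 ≤ i) (m : ℕ) : itc x (cc x y i) m = cc x y (i + m) := by
  rw [cc, cc, itc_add]
  congr 1
  omega

lemma conj_cc (x y : G) {i : ℕ} (hi : 1 ≤ i) : x⁻¹ * cc x y i * x = cc x y i * cc x y (i + 1) := by
  rw [← itc_cc x y hi 1]
  simp only [itc, pc]; group

lemma mem_of_mem_closure_of_map_mul {M : Type*} [Group M] {s : Set G} {S : Subgroup M}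
    {f : G → M} (hf : ∀ a ∈ Subgroup.closure s, ∀ b ∈ Subgroup.closure s, f (a * b) = f a * f b)
    (hs : ∀ a ∈ s, f a ∈ S) {a : G} (ha : a ∈ Subgroup.closure s) : f a ∈ S := by
  have hf_one : f 1 = 1 := by
    simpa using hf 1 (one_mem _) 1 (one_mem _)
  induction ha using Subgroup.closure_induction with
  | mem a ha => exact hs a ha
  | one => exact hf_one ▸ one_mem S
  | mul a b ha hb hfa hfb => exact hf a ha b hb ▸ mul_mem hfa hfb
  | inv a ha hfa =>
    have : f a⁻¹ * f a = 1 := by rw [← hf _ (inv_mem ha) _ ha, inv_mul_cancel, hf_one]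
    exact eq_inv_of_mul_eq_one_left this ▸ inv_mem hfa

section

variable (x y : G)

lemma cc_mem_Hsub (i : ℕ) : cc x y i ∈ Hsub x y :=
  Subgroup.subset_closure ⟨max i 1, le_max_right i 1, by simp only [cc]; congr 1; omega⟩

lemma Zsub_le_Hsub : Zsub x y ≤ Hsub x y := by
  refine (Subgroup.closure_le _).2 ?_
  rintro g (⟨l, -, rfl⟩ | ⟨m, n, -, -, rfl⟩)
  · exact pow_mem (cc_mem_Hsub x y l) 2
  · exact mul_mem (mul_mem (mul_mem (inv_mem (cc_mem_Hsub x y m)) (inv_mem (cc_mem_Hsub x y n)))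
      (cc_mem_Hsub x y m)) (cc_mem_Hsub x y n)

end

lemma itc_mem_of_conj_mem {x : G} {K : Subgroup G} (hK : ∀ g ∈ K, x⁻¹ * g * x ∈ K) {h : G}
    (hh : h ∈ K) (r : ℕ) : itc x h r ∈ K := by
  induction r with
  | zero => exact hh
  | succ r ih =>
    have : itc x h (r + 1) = (itc x h r)⁻¹ * (x⁻¹ * itc x h r * x) := by simp only [itc, pc]; group
    exact this ▸ mul_mem (inv_mem ih) (hK _ ih)

def itcDefect (x : G) (r : ℕ) (h₁ h₂ : G) : G :=
  ((List.range r).map fun l => itc x (pc (itc x h₁ (l + 1)) (itc x h₂ l)) (r - 1 - l)).prod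

lemma itcDefect_cc (x y : G) (k : ℕ) {i j : ℕ} (hi : 1 ≤ i) (hj : 1 ≤ j) :
    itcDefect x (2 ^ k - 1) (cc x y i) (cc x y j) = ww x y i j k := by
  refine congrArg List.prod (List.map_congr_left fun l _ => ?_)
  rw [itc_cc x y hi, itc_cc x y hj, show 2 ^ k - 1 - 1 - l = 2 ^ k - 2 - l by omega, ← add_assoc]
  rfl

section

variable {x y : G}

lemma conj_mem_Hsub {h : G} (hh : h ∈ Hsub x y) : x⁻¹ * h * x ∈ Hsub x y := by
  refine mem_of_mem_closure_of_map_mul (f := fun g => x⁻¹ * g * x) (fun a _ b _ => by group) ?_ hh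
  rintro g ⟨i, hi, rfl⟩
  simpa only [conj_cc x y hi] using mul_mem (cc_mem_Hsub x y i) (cc_mem_Hsub x y (i + 1))

lemma itc_mem_Hsub {h : G} (hh : h ∈ Hsub x y) (r : ℕ) : itc x h r ∈ Hsub x y :=
  itc_mem_of_conj_mem (fun _ => conj_mem_Hsub) hh r

lemma pc_x_mem_Hsub {h : G} (hh : h ∈ Hsub x y) : pc h x ∈ Hsub x y :=
  itc_mem_Hsub hh 1

variable (hca : ∀ z ∈ Zsub x y, ∀ h ∈ Hsub x y, z * h = h * z)
include hca

lemma commute_of_mem {z h : G} (hz : z ∈ Zsub x y) (hh : h ∈ Hsub x y) : Commute z h :=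
  hca z hz h hh

lemma pc_mem_Zsub_of_forall_cc {a : G} (ha : ∀ j, 1 ≤ j → pc a (cc x y j) ∈ Zsub x y) {b : G}
    (hb : b ∈ Hsub x y) : pc a b ∈ Zsub x y := by
  induction hb using Subgroup.closure_induction with
  | mem b hb =>
    obtain ⟨j, hj, rfl⟩ := hb
    exact ha j hj
  | one => rw [pc_one_right]; exact one_mem _
  | mul b c _ hc hab hac =>
    rw [pc_mul_right_of_commute (commute_of_mem hca hab hc).symm]
    exact mul_mem hac hab
  | inv b hb hab =>
    have : pc a b⁻¹ = b * (pc a b)⁻¹ * b⁻¹ := by simp only [pc]; group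
    rw [this, (commute_of_mem hca (inv_mem hab) hb).symm.mul_inv_cancel]
    exact inv_mem hab

lemma pc_mem_Zsub {a b : G} (ha : a ∈ Hsub x y) (hb : b ∈ Hsub x y) : pc a b ∈ Zsub x y := by
  refine pc_mem_Zsub_of_forall_cc hca (fun j hj => ?_) hb
  rw [← pc_inv_swap]
  exact inv_mem (pc_mem_Zsub_of_forall_cc hca
    (fun i hi => Subgroup.subset_closure (Or.inr ⟨j, i, hj, hi, rfl⟩)) ha)

lemma pc_mul_left_of_mem_Hsub {a b c : G} (ha : a ∈ Hsub x y) (hb : b ∈ Hsub x y)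
    (hc : c ∈ Hsub x y) : pc (a * b) c = pc a c * pc b c :=
  pc_mul_left_of_commute (commute_of_mem hca (pc_mem_Zsub hca ha hc) hb).symm

lemma pc_mul_right_of_mem_Hsub {a b c : G} (ha : a ∈ Hsub x y) (hb : b ∈ Hsub x y)
    (hc : c ∈ Hsub x y) : pc a (b * c) = pc a b * pc a c := by
  rw [pc_mul_right_of_commute (commute_of_mem hca (pc_mem_Zsub hca ha hb) hc).symm]
  exact commute_of_mem hca (pc_mem_Zsub hca ha hc) (Zsub_le_Hsub x y (pc_mem_Zsub hca ha hb))

lemma pc_mul_of_mem_Zsub_left {a z c : G} (ha : a ∈ Hsub x y) (hz : z ∈ Zsub x y)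
    (hc : c ∈ Hsub x y) : pc (a * z) c = pc a c := by
  rw [pc_mul_left_of_mem_Hsub hca ha (Zsub_le_Hsub x y hz) hc,
    pc_eq_one_of_commute (commute_of_mem hca hz hc), mul_one]

lemma pc_mul_of_mem_Zsub_right {a b z : G} (ha : a ∈ Hsub x y) (hb : b ∈ Hsub x y)
    (hz : z ∈ Zsub x y) : pc a (b * z) = pc a b := by
  rw [pc_mul_right_of_mem_Hsub hca ha hb (Zsub_le_Hsub x y hz),
    pc_eq_one_of_commute (commute_of_mem hca hz ha).symm, mul_one]

lemma conj_mem_Zsub {z : G} (hz : z ∈ Zsub x y) : x⁻¹ * z * x ∈ Zsub x y := by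
  refine mem_of_mem_closure_of_map_mul (f := fun g => x⁻¹ * g * x) (fun a _ b _ => by group) ?_ hz
  rintro g (⟨l, hl, rfl⟩ | ⟨m, n, -, -, rfl⟩)
  · have hsq : x⁻¹ * cc x y l ^ 2 * x
        = cc x y l ^ 2 * pc (cc x y l) (cc x y (l + 1))⁻¹ * cc x y (l + 1) ^ 2 := by
      rw [show x⁻¹ * cc x y l ^ 2 * x = (x⁻¹ * cc x y l * x) ^ 2 by simp only [pow_two]; group,
        conj_cc x y hl]
      simp only [pc, pow_two]; group
    rw [hsq]
    exact mul_mem (mul_mem (Subgroup.subset_closure (Or.inl ⟨l, hl, rfl⟩))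
        (pc_mem_Zsub hca (cc_mem_Hsub x y l) (inv_mem (cc_mem_Hsub x y (l + 1)))))
      (Subgroup.subset_closure (Or.inl ⟨l + 1, by omega, rfl⟩))
  · have hconj : x⁻¹ * zz x y m n * x = pc (x⁻¹ * cc x y m * x) (x⁻¹ * cc x y n * x) := by
      simp only [zz, pc]; group
    rw [hconj]
    exact pc_mem_Zsub hca (conj_mem_Hsub (cc_mem_Hsub x y m)) (conj_mem_Hsub (cc_mem_Hsub x y n))

lemma itc_mem_Zsub {z : G} (hz : z ∈ Zsub x y) (r : ℕ) : itc x z r ∈ Zsub x y :=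
  itc_mem_of_conj_mem (fun _ => conj_mem_Zsub hca) hz r

lemma pc_x_mem_Zsub {z : G} (hz : z ∈ Zsub x y) : pc z x ∈ Zsub x y :=
  itc_mem_Zsub hca hz 1

lemma pc_mul_of_mem_Zsub {a z : G} (ha : a ∈ Hsub x y) (hz : z ∈ Zsub x y) :
    pc (a * z) x = pc a x * pc z x :=
  pc_mul_left_of_commute (commute_of_mem hca hz (pc_x_mem_Hsub ha))

lemma pc_list_prod {L : List G} (hL : ∀ g ∈ L, g ∈ Zsub x y) :
    pc L.prod x = (L.map (pc · x)).prod := by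
  induction L with
  | nil => exact pc_one_left x
  | cons g L ih =>
    obtain ⟨hg, hL⟩ := List.forall_mem_cons.1 hL
    rw [List.prod_cons, List.map_cons, List.prod_cons,
      pc_mul_of_mem_Zsub hca (Zsub_le_Hsub x y hg) (list_prod_mem hL), ih hL]

section

variable {h₁ h₂ : G} (hh₁ : h₁ ∈ Hsub x y) (hh₂ : h₂ ∈ Hsub x y)
include hh₁ hh₂

lemma itcDefect_mem_Zsub (r : ℕ) : itcDefect x r h₁ h₂ ∈ Zsub x y :=
  list_prod_mem <| List.forall_mem_map.2 fun _ _ =>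
    itc_mem_Zsub hca (pc_mem_Zsub hca (itc_mem_Hsub hh₁ _) (itc_mem_Hsub hh₂ _)) _

lemma itcDefect_succ (r : ℕ) :
    itcDefect x (r + 1) h₁ h₂ =
      pc (itcDefect x r h₁ h₂) x * pc (itc x h₁ (r + 1)) (itc x h₂ r) := by
  rw [itcDefect, List.prod_range_succ, Nat.add_sub_cancel, Nat.sub_self, itcDefect,
    pc_list_prod hca, List.map_map]
  · refine congrArg (· * _) (congrArg List.prod (List.map_congr_left fun l hl => ?_))
    rw [show r - l = r - 1 - l + 1 by have := List.mem_range.1 hl; omega]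
    rfl
  · exact List.forall_mem_map.2 fun _ _ =>
      itc_mem_Zsub hca (pc_mem_Zsub hca (itc_mem_Hsub hh₁ _) (itc_mem_Hsub hh₂ _)) _

lemma itc_mul (r : ℕ) : itc x (h₁ * h₂) r = itc x h₁ r * itc x h₂ r * itcDefect x r h₁ h₂ := by
  induction r with
  | zero => simp [itc, itcDefect]
  | succ r ih =>
    set a := itc x h₁ r
    set b := itc x h₂ r
    set e := itcDefect x r h₁ h₂
    have ha : a ∈ Hsub x y := itc_mem_Hsub hh₁ r
    have hb : b ∈ Hsub x y := itc_mem_Hsub hh₂ r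
    have he : e ∈ Zsub x y := itcDefect_mem_Zsub hca hh₁ hh₂ r
    have hw {h : G} (hh : h ∈ Hsub x y) : Commute (pc (pc a x) b) h :=
      commute_of_mem hca (pc_mem_Zsub hca (pc_x_mem_Hsub ha) hb) hh
    calc itc x (h₁ * h₂) (r + 1) = pc (a * b * e) x := by rw [itc, ih]
      _ = pc a x * pc (pc a x) b * pc b x * pc e x := by
        rw [pc_mul_of_mem_Zsub hca (mul_mem ha hb) he, pc_mul_left_expand]
      _ = pc a x * pc b x * (pc e x * pc (pc a x) b) := by
        rw [(hw (pc_x_mem_Hsub hb)).right_comm,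
          (hw (pc_x_mem_Hsub (Zsub_le_Hsub x y he))).right_comm, mul_assoc]
      _ = itc x h₁ (r + 1) * itc x h₂ (r + 1) * itcDefect x (r + 1) h₁ h₂ := by
        rw [itcDefect_succ hca hh₁ hh₂]; rfl

end

section

variable {a b c : G} (ha : a ∈ Hsub x y) (hb : b ∈ Hsub x y) (hc : c ∈ Hsub x y)
include ha hb hc

lemma itcDefect_mul_left (r : ℕ) :
    itcDefect x r (a * b) c = itcDefect x r a c * itcDefect x r b c := by
  induction r with
  | zero => simp [itcDefect]
  | succ r ih =>
    have hac := itcDefect_mem_Zsub hca ha hc r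
    have hbc := itcDefect_mem_Zsub hca hb hc r
    have ha' := itc_mem_Hsub ha (r + 1)
    have hb' := itc_mem_Hsub hb (r + 1)
    have hc' := itc_mem_Hsub hc r
    rw [itcDefect_succ hca (mul_mem ha hb) hc, itcDefect_succ hca ha hc, itcDefect_succ hca hb hc,
      ih, pc_mul_of_mem_Zsub hca (Zsub_le_Hsub x y hac) hbc, itc_mul hca ha hb,
      pc_mul_of_mem_Zsub_left hca (mul_mem ha' hb') (itcDefect_mem_Zsub hca ha hb _) hc',
      pc_mul_left_of_mem_Hsub hca ha' hb' hc']
    exact (commute_of_mem hca (pc_x_mem_Zsub hca hbc)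
      (Zsub_le_Hsub x y (pc_mem_Zsub hca ha' hc'))).mul_mul_mul_comm _ _

lemma itcDefect_mul_right (r : ℕ) :
    itcDefect x r a (b * c) = itcDefect x r a b * itcDefect x r a c := by
  induction r with
  | zero => simp [itcDefect]
  | succ r ih =>
    have hab := itcDefect_mem_Zsub hca ha hb r
    have hac := itcDefect_mem_Zsub hca ha hc r
    have ha' := itc_mem_Hsub ha (r + 1)
    have hb' := itc_mem_Hsub hb r
    have hc' := itc_mem_Hsub hc r
    rw [itcDefect_succ hca ha (mul_mem hb hc), itcDefect_succ hca ha hb, itcDefect_succ hca ha hc,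
      ih, pc_mul_of_mem_Zsub hca (Zsub_le_Hsub x y hab) hac, itc_mul hca hb hc,
      pc_mul_of_mem_Zsub_right hca ha' (mul_mem hb' hc') (itcDefect_mem_Zsub hca hb hc _),
      pc_mul_right_of_mem_Hsub hca ha' hb' hc']
    exact (commute_of_mem hca (pc_x_mem_Zsub hca hac)
      (Zsub_le_Hsub x y (pc_mem_Zsub hca ha' hb'))).mul_mul_mul_comm _ _

end

lemma itcDefect_mem_of_ww_mem {S : Subgroup G} {k : ℕ}
    (hS : ∀ i j, 1 ≤ i → 1 ≤ j → ww x y i j k ∈ S) {h₁ h₂ : G} (hh₁ : h₁ ∈ Hsub x y)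
    (hh₂ : h₂ ∈ Hsub x y) : itcDefect x (2 ^ k - 1) h₁ h₂ ∈ S := by
  refine mem_of_mem_closure_of_map_mul (f := (itcDefect x (2 ^ k - 1) · h₂))
    (fun a ha b hb => itcDefect_mul_left hca ha hb hh₂ _) ?_ hh₁
  rintro _ ⟨i, hi, rfl⟩
  refine mem_of_mem_closure_of_map_mul (f := itcDefect x (2 ^ k - 1) (cc x y i))
    (fun a ha b hb => itcDefect_mul_right hca (cc_mem_Hsub x y i) ha hb _) ?_ hh₂
  rintro _ ⟨j, hj, rfl⟩
  exact itcDefect_cc x y k hi hj ▸ hS i j hi hj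

end

theorem lemma_Lk_ii_general (x y : G)
    (hca : ∀ z ∈ Zsub x y, ∀ h ∈ Hsub x y, z * h = h * z)
    (k : ℕ) (h₁ h₂ : G) (hh₁ : h₁ ∈ Hsub x y) (hh₂ : h₂ ∈ Hsub x y) :
    (itc x h₁ (2 ^ k - 1) * itc x h₂ (2 ^ k - 1))⁻¹ * itc x (h₁ * h₂) (2 ^ k - 1) ∈
      Lsub x y k := by
  rw [itc_mul hca hh₁ hh₂, inv_mul_cancel_left]
  exact itcDefect_mem_of_ww_mem hca
    (fun i j hi hj => Subgroup.subset_normalClosure (Or.inl ⟨i, j, hi, hj, rfl⟩)) hh₁ hh₂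

theorem lemma_Lk_ii (x y : G)
    (hca : ∀ z ∈ Zsub x y, ∀ h ∈ Hsub x y, z * h = h * z)
    (hz2 : ∀ z ∈ Zsub x y, z ^ 2 = 1)
    (k : ℕ) (hk : 1 ≤ k) (h₁ h₂ : G) (hh₁ : h₁ ∈ Hsub x y) (hh₂ : h₂ ∈ Hsub x y) :
    (itc x h₁ (2 ^ k - 1) * itc x h₂ (2 ^ k - 1))⁻¹ * itc x (h₁ * h₂) (2 ^ k - 1) ∈
      Lsub x y k :=
  lemma_Lk_ii_general x y hca k h₁ h₂ hh₁ hh₂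

end Paper
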